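/- Let F : ℝ^n → ℝ be a convex function with Bregman distance D_F^p(u,v) := F(u) − F(v) − ⟨p, u − v⟩, let A be a real m×n matrix, S a real m×m matrix, and d ∈ ℝ^m. Suppose p^{m-1} is a subgradient of F at f^{m-1}, that f^m is a global minimizer over ℝ^n of f ↦ D_F^{p^{m-1}}(f, f^{m-1}) + (1/2)‖S(d − Af)‖₂², and that p^m = p^{m-1} − AᵀSᵀS(Af^m − d). Then for every f* ∈ ℝ^n, D_F^{p^m}(f*, f^m) + (1/2)‖S(Af^m − d)‖₂² ≤ D_F^{p^{m-1}}(f*, f^{m-1}) + (1/2)‖S(Af* − d)‖₂². -/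

import Mathlib

open Matrix Finset

/-- Squared Euclidean norm of a vector. -/
noncomputable def enormSq {m : ℕ} (x : Fin m → ℝ) : ℝ := ∑ i, (x i) ^ 2

/-- The Bregman distance `D_F^p(u,v) = F(u) − F(v) − ⟨p, u − v⟩`. -/
noncomputable def bregman {n : ℕ} (F : (Fin n → ℝ) → ℝ) (p u v : Fin n → ℝ) : ℝ :=
  F u - F v - dotProduct p (u - v)

/-!
Write `x = S(Afᵐ − d)` and `y = S(Af* − d)`. The three-point identity gives
`D^{pᵐ}(f*, fᵐ) − D^{pᵐ⁻¹}(f*, fᵐ⁻¹) + D^{pᵐ⁻¹}(fᵐ, fᵐ⁻¹) = ⟨pᵐ⁻¹ − pᵐ, f* − fᵐ⟩`, and by the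
update rule the right side is `⟨x, y − x⟩ = ½‖y‖² − ½‖x‖² − ½‖y − x‖²`. Hence the difference of
the two sides of the claimed inequality is `−D^{pᵐ⁻¹}(fᵐ, fᵐ⁻¹) − ½‖y − x‖²`, which is `≤ 0`
because `pᵐ⁻¹` is a subgradient at `fᵐ⁻¹`.
-/

lemma enormSq_nonneg {m : ℕ} (x : Fin m → ℝ) : 0 ≤ enormSq x :=
  Finset.sum_nonneg fun _ _ => sq_nonneg _

lemma enormSq_add {m : ℕ} (x h : Fin m → ℝ) :
    enormSq (x + h) = enormSq x + 2 * (x ⬝ᵥ h) + enormSq h := by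
  simp only [enormSq, dotProduct, Pi.add_apply, Finset.mul_sum, ← Finset.sum_add_distrib]
  exact Finset.sum_congr rfl fun i _ => by ring

lemma bregman_three_point {n : ℕ} (F : (Fin n → ℝ) → ℝ) (p q w u v : Fin n → ℝ) :
    bregman F p w u - bregman F q w v + bregman F q u v = (q - p) ⬝ᵥ (w - u) := by
  simp only [bregman, sub_dotProduct, dotProduct_sub]
  ring

lemma bregman_nonneg_of_subgradient {n : ℕ} {F : (Fin n → ℝ) → ℝ} {p v : Fin n → ℝ}
    (hp : ∀ u, F v + p ⬝ᵥ (u - v) ≤ F u) (u : Fin n → ℝ) : 0 ≤ bregman F p u v := by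
  have := hp u
  unfold bregman
  linarith

lemma mulVec_transpose_mul_mulVec_dotProduct {R k l o : Type*} [CommRing R]
    [Fintype k] [Fintype l] [Fintype o] (A : Matrix l k R) (S : Matrix o l R) (r : l → R)
    (w : k → R) : ((Aᵀ * Sᵀ * S) *ᵥ r) ⬝ᵥ w = (S *ᵥ r) ⬝ᵥ (S *ᵥ (A *ᵥ w)) := by
  rw [← mulVec_mulVec, ← mulVec_mulVec, mulVec_transpose, ← dotProduct_mulVec,
    mulVec_transpose, ← dotProduct_mulVec]

theorem stmt11_general (m n : ℕ) (F : (Fin n → ℝ) → ℝ)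
    (A : Matrix (Fin m) (Fin n) ℝ) (S : Matrix (Fin m) (Fin m) ℝ) (d : Fin m → ℝ)
    (fm1 fm pm1 pm : Fin n → ℝ)
    (hsub : ∀ u : Fin n → ℝ, F fm1 + dotProduct pm1 (u - fm1) ≤ F u)
    (hpm : pm = pm1 - (Aᵀ * Sᵀ * S).mulVec (A.mulVec fm - d)) :
    ∀ fstar : Fin n → ℝ,
      bregman F pm fstar fm + (1 / 2) * enormSq (S.mulVec (A.mulVec fm - d))
        ≤ bregman F pm1 fstar fm1
          + (1 / 2) * enormSq (S.mulVec (A.mulVec fstar - d)) := by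
  intro fstar
  set x := S *ᵥ (A *ᵥ fm - d)
  set y := S *ᵥ (A *ᵥ fstar - d)
  have hstep : (pm1 - pm) ⬝ᵥ (fstar - fm) = x ⬝ᵥ (y - x) := by
    have hyx : y - x = S *ᵥ (A *ᵥ (fstar - fm)) := by
      simp only [x, y, mulVec_sub]
      abel
    rw [hpm, sub_sub_cancel, hyx, mulVec_transpose_mul_mulVec_dotProduct]
  have h3 := bregman_three_point F pm pm1 fstar fm fm1
  have hexpand := enormSq_add x (y - x)
  rw [add_sub_cancel] at hexpand
  have := bregman_nonneg_of_subgradient hsub fm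
  have := enormSq_nonneg (y - x)
  linarith

/-- one-step descent inequality for the Bregman iterative algorithm with a
linear forward operator: if `pᵐ⁻¹` is a subgradient of the convex `F` at `fᵐ⁻¹`, `fᵐ`
globally minimizes `f ↦ D_F^{pᵐ⁻¹}(f, fᵐ⁻¹) + (1/2)‖S(d − Af)‖₂²`, and
`pᵐ = pᵐ⁻¹ − AᵀSᵀS(Afᵐ − d)`, then for every `f*`,
`D_F^{pᵐ}(f*, fᵐ) + (1/2)‖S(Afᵐ − d)‖₂² ≤ D_F^{pᵐ⁻¹}(f*, fᵐ⁻¹) + (1/2)‖S(Af* − d)‖₂²`. -/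
theorem stmt11 (m n : ℕ) (F : (Fin n → ℝ) → ℝ) (hF : ConvexOn ℝ Set.univ F)
    (A : Matrix (Fin m) (Fin n) ℝ) (S : Matrix (Fin m) (Fin m) ℝ) (d : Fin m → ℝ)
    (fm1 fm pm1 pm : Fin n → ℝ)
    (hsub : ∀ u : Fin n → ℝ, F fm1 + dotProduct pm1 (u - fm1) ≤ F u)
    (hmin : ∀ f : Fin n → ℝ,
      bregman F pm1 fm fm1 + (1 / 2) * enormSq (S.mulVec (d - A.mulVec fm))
        ≤ bregman F pm1 f fm1 + (1 / 2) * enormSq (S.mulVec (d - A.mulVec f)))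
    (hpm : pm = pm1 - (Aᵀ * Sᵀ * S).mulVec (A.mulVec fm - d)) :
    ∀ fstar : Fin n → ℝ,
      bregman F pm fstar fm + (1 / 2) * enormSq (S.mulVec (A.mulVec fm - d))
        ≤ bregman F pm1 fstar fm1
          + (1 / 2) * enormSq (S.mulVec (A.mulVec fstar - d)) :=
  stmt11_general m n F A S d fm1 fm pm1 pm hsub hpm
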